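/- arXiv:1310.6374 — 3 statements merged into one kernel-verified Lean document; each statement's English description precedes it below -/
import Mathlib

section
/- For g(x) = 1 - ((2m+1)!/(m!)^2) ∫₀ˣ t^m (1-t)^m dt, one has ∫₀¹ (g^(m+1)(u))² du = (2m)!(2m+1)!/(m!)². -/
/-!
Differentiating under the integral sign, `g' = -c P` with `c = (2m+1)!/(m!)²` and
`P = X^m (1-X)^m`, so `g^(m+1) = -c P^(m)`. Since `P` has roots of order `m` at `0` and `1`,
`m` integrations by parts have no boundary terms and give
`∫₀¹ (P^(m))² = (-1)^m ∫₀¹ P P^(2m) = (2m)! ∫₀¹ P`, as `P^(2m)` is the constant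
`(-1)^m (2m)!`. Finally `∫₀¹ P = (m!)²/(2m+1)!` is a Beta integral.
-/

noncomputable def gsmooth (m : ℕ) (x : ℝ) : ℝ :=
  1 - ((Nat.factorial (2 * m + 1) : ℝ) / (Nat.factorial m : ℝ) ^ 2) *
    ∫ t in (0:ℝ)..x, t ^ m * (1 - t) ^ m

open Polynomial intervalIntegral Nat

namespace Polynomial

theorem isRoot_iterate_derivative_of_pow_dvd {R : Type*} [CommRing R] {p : R[X]} {t : R}
    {n k : ℕ} (h : (X - C t) ^ n ∣ p) (hk : k < n) : (derivative^[k] p).IsRoot t :=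
  dvd_iff_isRoot.mp <| (dvd_pow_self _ (Nat.sub_ne_zero_of_lt hk)).trans
    (pow_sub_dvd_iterate_derivative_of_pow_dvd k h)

theorem iterate_derivative_natDegree {R : Type*} [CommSemiring R] (p : R[X]) :
    derivative^[p.natDegree] p = C ((p.natDegree)! * p.leadingCoeff) := by
  rw [eq_C_of_natDegree_le_zero ((natDegree_iterate_derivative p _).trans (Nat.sub_self _).le),
    coeff_iterate_derivative, zero_add, Nat.descFactorial_self, nsmul_eq_mul, leadingCoeff]

theorem iteratedDeriv_eval {𝕜 : Type*} [NontriviallyNormedField 𝕜] (p : 𝕜[X]) (n : ℕ) :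
    iteratedDeriv n (fun x => p.eval x) = fun x => (derivative^[n] p).eval x := by
  induction n generalizing p with
  | zero => rfl
  | succ n ih =>
    rw [iteratedDeriv_succ', Function.iterate_succ_apply, ← ih]
    congr 1
    ext x
    exact p.deriv

theorem integral_derivative_mul_eq_neg (p q : ℝ[X]) {a b : ℝ} (ha : p.IsRoot a)
    (hb : p.IsRoot b) :
    ∫ x in a..b, (derivative p).eval x * q.eval x =
      -∫ x in a..b, p.eval x * (derivative q).eval x := by
  have := integral_mul_deriv_eq_deriv_mul (a := a) (b := b)
    (fun x _ => p.hasDerivAt x) (fun x _ => q.hasDerivAt x)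
    ((derivative p).continuous.intervalIntegrable _ _)
    ((derivative q).continuous.intervalIntegrable _ _)
  rw [ha.eq_zero, hb.eq_zero] at this
  linarith

theorem integral_iterate_derivative_mul_eq (p q : ℝ[X]) {a b : ℝ} (k : ℕ)
    (hp : ∀ j < k, (derivative^[j] p).IsRoot a ∧ (derivative^[j] p).IsRoot b) :
    ∫ x in a..b, (derivative^[k] p).eval x * q.eval x =
      (-1) ^ k * ∫ x in a..b, p.eval x * (derivative^[k] q).eval x := by
  induction k generalizing q with
  | zero => simp
  | succ k ih =>
    obtain ⟨ha, hb⟩ := hp k k.lt_succ_self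
    rw [Function.iterate_succ_apply', integral_derivative_mul_eq_neg _ _ ha hb,
      ih _ fun j hj => hp j (hj.trans k.lt_succ_self), ← Function.iterate_succ_apply, pow_succ]
    ring

end Polynomial

theorem integral_pow_mul_one_sub_pow (a b : ℕ) :
    ∫ x in (0:ℝ)..1, x ^ a * (1 - x) ^ b = (a ! * b ! : ℝ) / (a + b + 1)! := by
  have h := Complex.betaIntegral_eq_Gamma_mul_div (a + 1) (b + 1)
    (by simp; positivity) (by simp; positivity)
  rw [show (a + 1 + (b + 1) : ℂ) = ↑(a + b + 1) + 1 by push_cast; ring,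
    Complex.Gamma_nat_eq_factorial, Complex.Gamma_nat_eq_factorial,
    Complex.Gamma_nat_eq_factorial, Complex.betaIntegral] at h
  simp only [add_sub_cancel_right, Complex.cpow_natCast] at h
  rw [← Complex.ofReal_inj, ← intervalIntegral.integral_ofReal]
  push_cast
  exact h

noncomputable def betaPoly (m : ℕ) : ℝ[X] := X ^ m * (1 - X) ^ m

theorem eval_betaPoly (m : ℕ) (x : ℝ) : (betaPoly m).eval x = x ^ m * (1 - x) ^ m := by
  simp [betaPoly]

theorem betaPoly_eq_C_mul_monic (m : ℕ) :
    betaPoly m = C ((-1) ^ m) * (X ^ m * (X - C 1) ^ m) := by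
  rw [betaPoly, show (1 - X : ℝ[X]) = -(X - C 1) by simp, neg_pow, C_pow, C_neg, C_1]
  ring

theorem natDegree_betaPoly (m : ℕ) : (betaPoly m).natDegree = 2 * m := by
  rw [betaPoly_eq_C_mul_monic, natDegree_C_mul (by simp),
    (monic_X_pow m).natDegree_mul ((monic_X_sub_C 1).pow m), natDegree_X_pow, natDegree_pow,
    natDegree_X_sub_C]
  ring

theorem leadingCoeff_betaPoly (m : ℕ) : (betaPoly m).leadingCoeff = (-1) ^ m := by
  rw [betaPoly_eq_C_mul_monic, leadingCoeff_mul, leadingCoeff_C,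
    ((monic_X_pow m).mul ((monic_X_sub_C 1).pow m)).leadingCoeff, mul_one]

theorem iterate_derivative_betaPoly_two_mul (m : ℕ) :
    derivative^[2 * m] (betaPoly m) = C ((2 * m)! * (-1 : ℝ) ^ m) := by
  have := iterate_derivative_natDegree (betaPoly m)
  rwa [natDegree_betaPoly, leadingCoeff_betaPoly] at this

theorem isRoot_iterate_derivative_betaPoly {m j : ℕ} (hj : j < m) :
    (derivative^[j] (betaPoly m)).IsRoot 0 ∧ (derivative^[j] (betaPoly m)).IsRoot 1 := by
  constructor
  · refine isRoot_iterate_derivative_of_pow_dvd ⟨(1 - X) ^ m, ?_⟩ hj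
    simp [betaPoly]
  · refine isRoot_iterate_derivative_of_pow_dvd ⟨(-1) ^ m * X ^ m, ?_⟩ hj
    rw [betaPoly_eq_C_mul_monic, C_pow, C_neg, C_1]
    ring

theorem integral_sq_iterate_derivative_betaPoly (m : ℕ) :
    ∫ x in (0:ℝ)..1, (derivative^[m] (betaPoly m)).eval x ^ 2 =
      (2 * m)! * (m ! ^ 2 : ℝ) / (2 * m + 1)! := by
  simp_rw [sq]
  rw [integral_iterate_derivative_mul_eq _ _ m fun j => isRoot_iterate_derivative_betaPoly,
    ← Function.iterate_add_apply, ← two_mul, iterate_derivative_betaPoly_two_mul]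
  simp only [eval_C, eval_betaPoly, integral_mul_const, integral_pow_mul_one_sub_pow]
  rw [show m + m + 1 = 2 * m + 1 by ring]
  have hsign : ((-1 : ℝ) ^ m) * (-1) ^ m = 1 := by rw [← mul_pow]; norm_num
  linear_combination ((m ! * m ! * (2 * m)! : ℝ) / (2 * m + 1)!) * hsign

theorem hasDerivAt_gsmooth (m : ℕ) (x : ℝ) :
    HasDerivAt (gsmooth m) (-((2 * m + 1)! / (m ! ^ 2 : ℝ)) * (betaPoly m).eval x) x := by
  have hcont : Continuous fun t : ℝ => t ^ m * (1 - t) ^ m := by fun_prop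
  have := ((integral_hasDerivAt_right (hcont.intervalIntegrable 0 x)
    hcont.aestronglyMeasurable.stronglyMeasurableAtFilter hcont.continuousAt).const_mul
    ((2 * m + 1)! / (m ! ^ 2 : ℝ))).const_sub 1
  rw [eval_betaPoly, neg_mul]
  exact this

theorem iteratedDeriv_succ_gsmooth (m n : ℕ) :
    iteratedDeriv (n + 1) (gsmooth m) = fun x =>
      -((2 * m + 1)! / (m ! ^ 2 : ℝ)) * (derivative^[n] (betaPoly m)).eval x := by
  have hderiv : deriv (gsmooth m) =
      fun x => (C (-((2 * m + 1)! / (m ! ^ 2 : ℝ))) * betaPoly m).eval x := by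
    ext x
    rw [(hasDerivAt_gsmooth m x).deriv, eval_mul, eval_C]
  rw [iteratedDeriv_succ', hderiv, iteratedDeriv_eval, iterate_derivative_C_mul]
  simp only [eval_mul, eval_C]

theorem stmt_4_general (m : ℕ) :
    ∫ u in (0:ℝ)..1, (iteratedDeriv (m + 1) (gsmooth m) u) ^ 2 =
      (Nat.factorial (2 * m) : ℝ) * (Nat.factorial (2 * m + 1) : ℝ) /
        (Nat.factorial m : ℝ) ^ 2 := by
  simp only [iteratedDeriv_succ_gsmooth, mul_pow, neg_sq, integral_const_mul,
    integral_sq_iterate_derivative_betaPoly]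
  field_simp

theorem stmt_4 (m : ℕ) (hm : 0 < m) :
    ∫ u in (0:ℝ)..1, (iteratedDeriv (m + 1) (gsmooth m) u) ^ 2 =
      (Nat.factorial (2 * m) : ℝ) * (Nat.factorial (2 * m + 1) : ℝ) /
        (Nat.factorial m : ℝ) ^ 2 :=
  stmt_4_general m
end

section
/- For any real numbers 0 < a < b and nonnegative integer m, M(a,b,m) ≤ sqrt((b^(2m+3) - a^(2m+3))/((b-a)(2m+3))) · sqrt((2m)!(2m+1)!)/m!, where M(a,b,m) = ((2m+1)!/m!) ∫₀¹ |P_m(1-2u)| ((b-a)u + a)^(m+1) du and P_m is the m-th Legendre polynomial. -/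
/-- The `m`-th Legendre polynomial via Rodrigues' formula. -/
noncomputable def legendreP (m : ℕ) (x : ℝ) : ℝ :=
  (1 / (2 ^ m * (Nat.factorial m : ℝ))) *
    iteratedDeriv m (fun y : ℝ => (y ^ 2 - 1) ^ m) x

noncomputable def Mconst (a b : ℝ) (m : ℕ) : ℝ :=
  ((Nat.factorial (2 * m + 1) : ℝ) / (Nat.factorial m : ℝ)) *
    ∫ u in (0:ℝ)..1, |legendreP m (1 - 2 * u)| * ((b - a) * u + a) ^ (m + 1)

/-!
By Cauchy–Schwarz on `[0, 1]`, `M(a, b, m)` is at most `(2m+1)!/m!` times the product of the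
`L²` norms of `u ↦ P_m(1 - 2u)` and `u ↦ ((b - a)u + a)^(m+1)`. The second is an elementary
integral. The square of the first is, after the substitution `x = 1 - 2u`, half of
`∫_{-1}^1 P_m² = 2/(2m+1)`. By Rodrigues' formula this is a multiple of `∫ (D^m R)²` with
`R = (x² - 1)^m`, and `m` integrations by parts turn it into
`(-1)^m ∫ R · D^{2m} R = (2m)! ∫ (1 - x²)^m`, the boundary terms vanishing because `±1` are
roots of order `m` of `R`.
-/

open Polynomial intervalIntegral
open scoped Nat

theorem Polynomial.iteratedDeriv_eval_s10 {𝕜 : Type*} [NontriviallyNormedField 𝕜] (n : ℕ)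
    (p : 𝕜[X]) : iteratedDeriv n (fun x => p.eval x) = fun x => (derivative^[n] p).eval x := by
  induction n generalizing p with
  | zero => rfl
  | succ n ih =>
    have hderiv : deriv (fun x => p.eval x) = fun x => p.derivative.eval x :=
      _root_.funext fun _ => Polynomial.deriv p
    rw [iteratedDeriv_succ', hderiv, ih, Function.iterate_succ_apply]

theorem intervalIntegral.integral_mul_le_sqrt_mul_sqrt {f g : ℝ → ℝ} {a b : ℝ}
    (hab : a ≤ b)
    (hf : IntervalIntegrable (fun x => f x ^ 2) MeasureTheory.volume a b)
    (hg : IntervalIntegrable (fun x => g x ^ 2) MeasureTheory.volume a b)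
    (hfg : IntervalIntegrable (fun x => f x * g x) MeasureTheory.volume a b) :
    ∫ x in a..b, f x * g x ≤ √(∫ x in a..b, f x ^ 2) * √(∫ x in a..b, g x ^ 2) := by
  set A := ∫ x in a..b, f x ^ 2
  set B := ∫ x in a..b, f x * g x
  set C := ∫ x in a..b, g x ^ 2
  have hA : 0 ≤ A := integral_nonneg hab fun x _ => sq_nonneg (f x)
  have hquad : ∀ t : ℝ, 0 ≤ C * (t * t) + 2 * B * t + A := fun t => by
    have hexp : ∫ x in a..b, (f x + t * g x) ^ 2 = C * (t * t) + 2 * B * t + A := by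
      have hsq : (fun x => (f x + t * g x) ^ 2) =
          fun x => f x ^ 2 + 2 * t * (f x * g x) + t ^ 2 * g x ^ 2 := by
        funext x; ring
      rw [hsq, integral_add (hf.add (hfg.const_mul _)) (hg.const_mul _),
        integral_add hf (hfg.const_mul _), integral_const_mul, integral_const_mul]
      ring
    rw [← hexp]
    exact integral_nonneg hab fun x _ => sq_nonneg _
  have hdisc : B ^ 2 ≤ A * C := by
    have := discrim_le_zero hquad
    rw [discrim] at this
    linarith
  calc B ≤ |B| := le_abs_self B
    _ ≤ √(A * C) := Real.abs_le_sqrt hdisc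
    _ = √A * √C := Real.sqrt_mul hA C

section Rodrigues

variable (R : Type*) [CommRing R]

noncomputable def rodriguesPoly (m : ℕ) : R[X] := (X ^ 2 - 1) ^ m

variable {R}

theorem iterate_derivative_rodriguesPoly_eval_eq_zero {m j : ℕ} (hj : j < m) {c : R}
    (hc : c ^ 2 = 1) : (derivative^[j] (rodriguesPoly R m)).eval c = 0 := by
  have hCc : C c ^ 2 = 1 := by rw [← C_pow, hc, C_1]
  have hfactor : X - C c ∣ X ^ 2 - 1 := ⟨X + C c, by linear_combination hCc⟩
  have hdvd : (X - C c) ^ (m - j) ∣ derivative^[j] (rodriguesPoly R m) :=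
    pow_sub_dvd_iterate_derivative_of_pow_dvd j (pow_dvd_pow_of_dvd hfactor m)
  exact dvd_iff_isRoot.mp ((dvd_pow_self _ (Nat.sub_ne_zero_of_lt hj)).trans hdvd)

theorem iterate_derivative_rodriguesPoly_two_mul (m : ℕ) :
    derivative^[2 * m] (rodriguesPoly R m) = C ((2 * m)! : R) := by
  have hquad : (X ^ 2 - 1 : R[X]).natDegree ≤ 2 := by compute_degree
  have hdeg : (rodriguesPoly R m).natDegree ≤ m * 2 :=
    natDegree_pow_le.trans (Nat.mul_le_mul_left m hquad)
  ext k
  rw [coeff_iterate_derivative, coeff_C]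
  rcases Nat.eq_zero_or_pos k with rfl | hk
  · rw [if_pos rfl, zero_add, Nat.descFactorial_self, mul_comm 2 m, rodriguesPoly,
      coeff_pow_of_natDegree_le hquad]
    simp [coeff_one]
  · rw [if_neg hk.ne', coeff_eq_zero_of_natDegree_lt (by omega), smul_zero]

end Rodrigues

theorem integral_derivative_mul_eval_eq_neg {a b : ℝ} (p q : ℝ[X]) (ha : q.eval a = 0)
    (hb : q.eval b = 0) :
    ∫ x in a..b, p.derivative.eval x * q.eval x =
      -∫ x in a..b, p.eval x * q.derivative.eval x := by
  have h := integral_mul_deriv_eq_deriv_mul (fun x _ => p.hasDerivAt x) (fun x _ => q.hasDerivAt x)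
    (p.derivative.continuous.intervalIntegrable a b)
    (q.derivative.continuous.intervalIntegrable a b)
  rw [ha, hb, mul_zero, mul_zero, sub_zero, zero_sub] at h
  linarith

theorem integral_iterate_derivative_mul_eval {a b : ℝ} (p q : ℝ[X]) (k : ℕ)
    (hq : ∀ j < k, (derivative^[j] q).eval a = 0 ∧ (derivative^[j] q).eval b = 0) :
    ∫ x in a..b, (derivative^[k] p).eval x * q.eval x =
      (-1) ^ k * ∫ x in a..b, p.eval x * (derivative^[k] q).eval x := by
  induction k generalizing p with
  | zero => simp
  | succ k ih =>
    rw [Function.iterate_succ_apply, ih _ fun j hj => hq j (by omega),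
      integral_derivative_mul_eval_eq_neg _ _ (hq k k.lt_succ_self).1 (hq k k.lt_succ_self).2,
      ← Function.iterate_succ_apply' derivative, pow_succ]
    ring

theorem integral_one_sub_sq_pow_succ (m : ℕ) :
    (2 * m + 3 : ℝ) * ∫ x in (-1 : ℝ)..1, (1 - x ^ 2) ^ (m + 1) =
      (2 * m + 2) * ∫ x in (-1 : ℝ)..1, (1 - x ^ 2) ^ m := by
  have hderiv : ∀ x : ℝ, HasDerivAt (fun x => (1 - x ^ 2) ^ (m + 1))
      (-(2 * (m + 1)) * (x * (1 - x ^ 2) ^ m)) x := fun x => by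
    refine (((hasDerivAt_pow 2 x).const_sub 1).fun_pow (m + 1)).congr_deriv ?_
    push_cast
    ring
  have hparts := integral_mul_deriv_eq_deriv_mul (a := -1) (b := 1) (fun x _ => hderiv x)
    (fun x _ => hasDerivAt_id' x) (Continuous.intervalIntegrable (by fun_prop) _ _)
    (Continuous.intervalIntegrable (by fun_prop) _ _)
  have hsplit : ∫ x in (-1 : ℝ)..1, -(2 * ((m : ℝ) + 1)) * (x * (1 - x ^ 2) ^ m) * x =
      -(2 * ((m : ℝ) + 1)) * ((∫ x in (-1 : ℝ)..1, (1 - x ^ 2) ^ m) -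
        ∫ x in (-1 : ℝ)..1, (1 - x ^ 2) ^ (m + 1)) := by
    rw [← integral_sub (Continuous.intervalIntegrable (by fun_prop) _ _)
      (Continuous.intervalIntegrable (by fun_prop) _ _), ← integral_const_mul]
    congr 1; ext x; ring
  rw [hsplit] at hparts
  norm_num at hparts
  linear_combination hparts

theorem integral_one_sub_sq_pow (m : ℕ) :
    ∫ x in (-1 : ℝ)..1, (1 - x ^ 2) ^ m = 2 ^ (2 * m + 1) * (m ! : ℝ) ^ 2 / (2 * m + 1)! := by
  induction m with
  | zero => norm_num
  | succ m ih =>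
    have hrec := integral_one_sub_sq_pow_succ m
    rw [ih] at hrec
    rw [eq_div_iff (by positivity), show 2 * (m + 1) + 1 = 2 * m + 1 + 1 + 1 by ring,
      Nat.factorial_succ (2 * m + 1 + 1), Nat.factorial_succ (2 * m + 1), Nat.factorial_succ m]
    field_simp at hrec
    push_cast
    linear_combination (2 * (m : ℝ) + 2) * hrec

theorem legendreP_eq_eval (m : ℕ) (x : ℝ) :
    legendreP m x = 1 / (2 ^ m * m !) * (derivative^[m] (rodriguesPoly ℝ m)).eval x := by
  have hrod : (fun y : ℝ => (y ^ 2 - 1) ^ m) = fun y => (rodriguesPoly ℝ m).eval y := by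
    simp [rodriguesPoly]
  rw [legendreP, hrod, Polynomial.iteratedDeriv_eval_s10]

theorem integral_iterate_derivative_rodriguesPoly_sq (m : ℕ) :
    ∫ x in (-1 : ℝ)..1, (derivative^[m] (rodriguesPoly ℝ m)).eval x ^ 2 =
      (2 * m)! * (2 ^ (2 * m + 1) * (m ! : ℝ) ^ 2 / (2 * m + 1)!) := by
  have hparts := integral_iterate_derivative_mul_eval (a := -1) (b := 1)
    (derivative^[m] (rodriguesPoly ℝ m)) (rodriguesPoly ℝ m) m fun j hj =>
      ⟨iterate_derivative_rodriguesPoly_eval_eq_zero hj (by norm_num),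
        iterate_derivative_rodriguesPoly_eval_eq_zero hj (by norm_num)⟩
  rw [← Function.iterate_add_apply, ← two_mul,
    iterate_derivative_rodriguesPoly_two_mul] at hparts
  have hrod : ∀ x : ℝ, (rodriguesPoly ℝ m).eval x = (-1) ^ m * (1 - x ^ 2) ^ m := fun x => by
    simp [rodriguesPoly, ← mul_pow]
  simp only [eval_C, hrod, ← mul_assoc, integral_const_mul, integral_one_sub_sq_pow] at hparts
  refine mul_left_cancel₀ (pow_ne_zero m (neg_ne_zero.mpr one_ne_zero)) ?_
  simp only [sq]
  rw [← hparts]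
  ring

theorem integral_legendreP_sq (m : ℕ) :
    ∫ x in (-1 : ℝ)..1, legendreP m x ^ 2 = 2 / (2 * m + 1) := by
  simp only [legendreP_eq_eval, mul_pow, integral_const_mul,
    integral_iterate_derivative_rodriguesPoly_sq]
  rw [Nat.factorial_succ (2 * m), pow_succ]
  push_cast
  field_simp
  ring

theorem integral_legendreP_one_sub_two_mul_sq (m : ℕ) :
    ∫ u in (0 : ℝ)..1, legendreP m (1 - 2 * u) ^ 2 = 1 / (2 * m + 1) := by
  rw [integral_comp_sub_mul (fun x => legendreP m x ^ 2) two_ne_zero]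
  norm_num [integral_legendreP_sq]
  ring

theorem integral_sub_mul_add_pow {a b : ℝ} (hab : a ≠ b) (n : ℕ) :
    ∫ u in (0 : ℝ)..1, ((b - a) * u + a) ^ n =
      (b ^ (n + 1) - a ^ (n + 1)) / ((b - a) * (n + 1)) := by
  have hba : b - a ≠ 0 := sub_ne_zero.mpr hab.symm
  rw [integral_comp_mul_add (fun x => x ^ n) hba, integral_pow, smul_eq_mul, mul_zero, zero_add,
    mul_one, sub_add_cancel]
  field_simp

theorem continuous_legendreP (m : ℕ) : Continuous (legendreP m) := by
  rw [funext (legendreP_eq_eval m)]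
  exact continuous_const.mul (Polynomial.continuous _)

theorem sqrt_factorial_two_mul_mul_factorial_two_mul_add_one (m : ℕ) :
    √((2 * m)! * (2 * m + 1)! : ℝ) = (2 * m + 1)! * √(1 / (2 * m + 1)) := by
  calc √((2 * m)! * (2 * m + 1)! : ℝ) = √(((2 * m + 1)! : ℝ) ^ 2 * (1 / (2 * m + 1))) := by
        rw [Nat.factorial_succ (2 * m)]
        push_cast
        field_simp
    _ = (2 * m + 1)! * √(1 / (2 * m + 1)) := by
        rw [Real.sqrt_mul (sq_nonneg _), Real.sqrt_sq (by positivity)]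

theorem stmt_10_general (a b : ℝ) (hab : a < b) (m : ℕ) :
    Mconst a b m ≤
      Real.sqrt ((b ^ (2 * m + 3) - a ^ (2 * m + 3)) / ((b - a) * (2 * m + 3))) *
        Real.sqrt ((Nat.factorial (2 * m) : ℝ) * (Nat.factorial (2 * m + 1) : ℝ)) /
          (Nat.factorial m : ℝ) := by
  set g : ℝ → ℝ := fun u => ((b - a) * u + a) ^ (m + 1)
  have hP : Continuous fun u : ℝ => |legendreP m (1 - 2 * u)| :=
    ((continuous_legendreP m).comp (by fun_prop)).abs
  have hg : Continuous g := by fun_prop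
  have hg_sq : ∫ u in (0 : ℝ)..1, g u ^ 2 =
      (b ^ (2 * m + 3) - a ^ (2 * m + 3)) / ((b - a) * (2 * m + 3)) := by
    simp_rw [g, ← pow_mul]
    rw [integral_sub_mul_add_pow hab.ne]
    push_cast
    ring_nf
  have hCS := integral_mul_le_sqrt_mul_sqrt zero_le_one ((hP.pow 2).intervalIntegrable 0 1)
    ((hg.pow 2).intervalIntegrable 0 1) ((hP.mul hg).intervalIntegrable 0 1)
  simp only [sq_abs, integral_legendreP_one_sub_two_mul_sq, hg_sq] at hCS
  rw [Mconst, sqrt_factorial_two_mul_mul_factorial_two_mul_add_one]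
  refine (mul_le_mul_of_nonneg_left hCS (by positivity)).trans_eq ?_
  ring

theorem stmt_10 (a b : ℝ) (ha : 0 < a) (hab : a < b) (m : ℕ) :
    Mconst a b m ≤
      Real.sqrt ((b ^ (2 * m + 3) - a ^ (2 * m + 3)) / ((b - a) * (2 * m + 3))) *
        Real.sqrt ((Nat.factorial (2 * m) : ℝ) * (Nat.factorial (2 * m + 1) : ℝ)) /
          (Nat.factorial m : ℝ) :=
  stmt_10_general a b hab m
end

section
/- Let z > 0 and w > 1, and define K₁(z,w) = ½∫_w^∞ exp(-(z/2)(t + 1/t)) dt. Then K₁(z,w) ≤ (w²/(z(w²-1))) exp(-(z/2)(w + 1/w)). -/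
/-!
Since `t ↦ 1 - 1/t²` increases on `(1, ∞)`, for `t > w` the integrand `exp(-(z/2)(t + 1/t))` is at
most `2w²/(z(w² - 1))` times `(z/2)(1 - 1/t²) exp(-(z/2)(t + 1/t))`, which is the derivative of
`-exp(-(z/2)(t + 1/t))`. Integrating this derivative from `w` to `∞` gives `exp(-(z/2)(w + 1/w))`.
-/

open MeasureTheory Real Set Filter Topology

theorem setIntegral_Ioi_le_of_le_deriv {f g G : ℝ → ℝ} {a m : ℝ}
    (hG : ContinuousWithinAt G (Ici a) a) (hderiv : ∀ t ∈ Ioi a, HasDerivAt G (g t) t)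
    (hf : ∀ t ∈ Ioi a, 0 ≤ f t) (hfg : ∀ t ∈ Ioi a, f t ≤ g t) (hlim : Tendsto G atTop (𝓝 m)) :
    ∫ t in Ioi a, f t ≤ m - G a := by
  have hg : ∀ t ∈ Ioi a, 0 ≤ g t := fun t ht => (hf t ht).trans (hfg t ht)
  rw [← integral_Ioi_of_hasDerivAt_of_nonneg hG hderiv hg hlim]
  exact integral_mono_of_nonneg ((ae_restrict_iff' measurableSet_Ioi).2 (.of_forall hf))
    (integrableOn_Ioi_deriv_of_nonneg hG hderiv hg hlim)
    ((ae_restrict_iff' measurableSet_Ioi).2 (.of_forall hfg))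

theorem hasDerivAt_exp_neg_mul_add_inv (c : ℝ) {t : ℝ} (ht : t ≠ 0) :
    HasDerivAt (fun t => exp (-c * (t + 1 / t)))
      (-c * (1 - 1 / t ^ 2) * exp (-c * (t + 1 / t))) t := by
  have h : HasDerivAt (fun t : ℝ => t + 1 / t) (1 - 1 / t ^ 2) t := by
    simpa only [one_div, sub_eq_add_neg, Pi.add_def, id] using (hasDerivAt_id t).add (hasDerivAt_inv ht)
  convert ((h.const_mul (-c)).exp) using 1
  ring

theorem tendsto_exp_neg_mul_add_inv_atTop {c : ℝ} (hc : 0 < c) :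
    Tendsto (fun t => exp (-c * (t + 1 / t))) atTop (𝓝 0) := by
  refine tendsto_exp_atBot.comp (tendsto_atBot_mono' _ ?_
    (tendsto_neg_atTop_atBot.comp (tendsto_id.const_mul_atTop hc)))
  filter_upwards [eventually_gt_atTop 0] with t ht
  have : 0 < 1 / t := by positivity
  simp only [Function.comp_apply, id]
  nlinarith

theorem one_le_div_mul_one_sub_inv_sq {w t : ℝ} (hw : 1 < w) (hwt : w ≤ t) :
    1 ≤ w ^ 2 / (w ^ 2 - 1) * (1 - 1 / t ^ 2) := by
  have hw2 : 0 < w ^ 2 - 1 := by nlinarith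
  have hinv : 1 / t ^ 2 ≤ 1 / w ^ 2 := one_div_le_one_div_of_le (by positivity) (by nlinarith)
  rw [div_mul_eq_mul_div, le_div_iff₀ hw2, one_mul]
  calc w ^ 2 - 1 = w ^ 2 * (1 - 1 / w ^ 2) := by field_simp
    _ ≤ w ^ 2 * (1 - 1 / t ^ 2) := by gcongr

theorem stmt_13 (z w : ℝ) (hz : 0 < z) (hw : 1 < w) :
    (1 / 2) * ∫ t in Set.Ioi w, Real.exp (-(z / 2) * (t + 1 / t)) ≤
      (w ^ 2 / (z * (w ^ 2 - 1))) * Real.exp (-(z / 2) * (w + 1 / w)) := by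
  set c := z / 2 with hc
  set k := w ^ 2 / (w ^ 2 - 1) / c
  have hc0 : 0 < c := by positivity
  have hderiv (t : ℝ) (ht : t ∈ Ici w) :
      HasDerivAt (fun t => -k * exp (-c * (t + 1 / t)))
        (k * (c * (1 - 1 / t ^ 2)) * exp (-c * (t + 1 / t))) t := by
    refine ((hasDerivAt_exp_neg_mul_add_inv c ?_).const_mul (-k)).congr_deriv (by ring)
    linarith [mem_Ici.1 ht]
  have hle (t : ℝ) (ht : t ∈ Ioi w) :
      exp (-c * (t + 1 / t)) ≤ k * (c * (1 - 1 / t ^ 2)) * exp (-c * (t + 1 / t)) := by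
    refine le_mul_of_one_le_left (exp_pos _).le ?_
    rw [← mul_assoc, div_mul_cancel₀ _ hc0.ne']
    exact one_le_div_mul_one_sub_inv_sq hw (le_of_lt ht)
  have hbound := setIntegral_Ioi_le_of_le_deriv
    (hderiv w self_mem_Ici).continuousAt.continuousWithinAt
    (fun t ht => hderiv t (Ioi_subset_Ici_self ht)) (fun t _ => (exp_pos _).le) hle
    ((tendsto_exp_neg_mul_add_inv_atTop hc0).const_mul (-k))
  calc (1 / 2) * ∫ t in Ioi w, exp (-c * (t + 1 / t))
      ≤ (1 / 2) * (k * exp (-c * (w + 1 / w))) := by gcongr; simpa using hbound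
    _ = w ^ 2 / (z * (w ^ 2 - 1)) * exp (-c * (w + 1 / w)) := by
      simp only [k, hc]; field_simp
end
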